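/- If subspaces {W_i}_{i=1}^n of R^d with orthogonal projections {P_i}_{i=1}^n do phase retrieval, then for every nonzero x ∈ R^d, the vectors {P_i x}_{i=1}^n span R^d. -/

import Mathlib

/-! If some `u ≠ 0` were orthogonal to every `P i x`, then `P i x ⟂ P i u`, so
`‖P i (x + u)‖ = ‖P i (x - u)‖` for all `i`. Phase retrieval then forces `x + u = ±(x - u)`,
that is `u = 0` or `x = 0`. -/

open scoped InnerProductSpace

open Submodule Set

variable {ι E : Type*} [NormedAddCommGroup E] [InnerProductSpace ℝ E]

def DoesPhaseRetrieval (W : ι → Submodule ℝ E) [∀ i, (W i).HasOrthogonalProjection] : Prop :=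
  ∀ x y : E, (∀ i, ‖(W i).starProjection x‖ = ‖(W i).starProjection y‖) → x = y ∨ x = -y

theorem Submodule.norm_starProjection_add_eq_norm_starProjection_sub (K : Submodule ℝ E)
    [K.HasOrthogonalProjection] {x u : E} (h : ⟪K.starProjection x, u⟫_ℝ = 0) :
    ‖K.starProjection (x + u)‖ = ‖K.starProjection (x - u)‖ := by
  have hcross : ⟪K.starProjection x, K.starProjection u⟫_ℝ = 0 := by
    rw [← inner_starProjection_left_eq_right,
      starProjection_eq_self_iff.mpr (K.starProjection_apply_mem x), h]
  rw [map_add, map_sub, ← sq_eq_sq₀ (norm_nonneg _) (norm_nonneg _), norm_add_sq_real,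
    norm_sub_sq_real, hcross]
  ring

theorem DoesPhaseRetrieval.span_starProjection_eq_top [FiniteDimensional ℝ E]
    {W : ι → Submodule ℝ E} (hW : DoesPhaseRetrieval W) {x : E} (hx : x ≠ 0) :
    span ℝ (range fun i => (W i).starProjection x) = ⊤ := by
  have : IsAddTorsionFree E := .of_isTorsionFree ℝ E
  rw [← orthogonal_eq_bot_iff, eq_bot_iff]
  intro u hu
  have hperp (i : ι) : ⟪(W i).starProjection x, u⟫_ℝ = 0 :=
    inner_right_of_mem_orthogonal (subset_span (mem_range_self i)) hu
  rcases hW (x + u) (x - u)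
      fun i => (W i).norm_starProjection_add_eq_norm_starProjection_sub (hperp i) with h | h
  · rw [sub_eq_add_neg] at h
    exact self_eq_neg.mp (add_left_cancel h)
  · rw [neg_sub, sub_eq_add_neg, add_comm x] at h
    exact absurd (self_eq_neg.mp (add_left_cancel h)) hx

/-- (Edidin) If subspaces do phase retrieval, then for every nonzero `x` the
projections of `x` span `ℝ^d`. -/
theorem phase_retrieval_projections_span (d n : ℕ)
    (W : Fin n → Submodule ℝ (EuclideanSpace ℝ (Fin d)))
    (hPR : ∀ x y : EuclideanSpace ℝ (Fin d),
      (∀ i, ‖((W i).orthogonalProjectionOnto x : EuclideanSpace ℝ (Fin d))‖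
        = ‖((W i).orthogonalProjectionOnto y : EuclideanSpace ℝ (Fin d))‖) → x = y ∨ x = -y) :
    ∀ x : EuclideanSpace ℝ (Fin d), x ≠ 0 →
      Submodule.span ℝ
        (Set.range fun i => ((W i).orthogonalProjectionOnto x : EuclideanSpace ℝ (Fin d))) = ⊤ :=
  -- `starProjection` unfolds to the coercion of `orthogonalProjectionOnto`.
  fun _ hx => DoesPhaseRetrieval.span_starProjection_eq_top hPR hx
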